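/- Let G=(V,E) be a graph with maximum degree Δ and A,B,C ⊆ V with A ∪ C = V, A ∩ C = B, and no edges between A∖B and C∖B. Given independent dominating sets X of G[A] and Y of G[C], there exists an independent dominating set of G of size at most |X| + |Y| + (Δ+1)·|B|. -/

import Mathlib

/-- `X` is an independent set in `G`. -/
def IsIndepSet' {V : Type*} (G : SimpleGraph V) (X : Set V) : Prop :=
  ∀ x ∈ X, ∀ y ∈ X, ¬ G.Adj x y

/-- `X` is an independent dominating set of the induced subgraph `G[A]`. -/
def IndDomOn {V : Type*} (G : SimpleGraph V) (A X : Set V) : Prop :=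
  X ⊆ A ∧ IsIndepSet' G X ∧ ∀ v ∈ A, ∃ x ∈ X, x = v ∨ G.Adj x v

/-!
Outside the separator `B` the two solutions do not interact: `(X ∪ Y) \ B` is independent,
and a vertex it fails to dominate was dominated by a vertex of `B`, so it lies in the closed
neighbourhood `N[B]`, of size at most `(Δ + 1) |B|`. A maximal independent set between
`(X ∪ Y) \ B` and `(X ∪ Y) \ B ∪ N[B]` is then an independent dominating set of `G`.
-/

namespace SimpleGraph

variable {V : Type*} (G : SimpleGraph V)

def closedNbhd (B : Set V) : Set V :=
  ⋃ b ∈ B, insert b (G.neighborSet b)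

variable {G} in
lemma ncard_closedNbhd_le [Finite V] {Δ : ℕ} (hΔ : ∀ v : V, (G.neighborSet v).ncard ≤ Δ)
    (B : Set V) : (G.closedNbhd B).ncard ≤ (Δ + 1) * B.ncard := by
  have hB := B.toFinite
  calc (G.closedNbhd B).ncard
      = (⋃ b ∈ hB.toFinset, insert b (G.neighborSet b)).ncard := by
        simp only [closedNbhd, Set.Finite.mem_toFinset]
    _ ≤ ∑ b ∈ hB.toFinset, (insert b (G.neighborSet b)).ncard :=
        hB.toFinset.set_ncard_biUnion_le _
    _ ≤ ∑ _b ∈ hB.toFinset, (Δ + 1) :=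
        Finset.sum_le_sum fun b _ => (Set.ncard_insert_le _ _).trans (by gcongr; exact hΔ b)
    _ = (Δ + 1) * B.ncard := by
        rw [Finset.sum_const, smul_eq_mul, ← Set.ncard_eq_toFinset_card _ hB, mul_comm]

end SimpleGraph

open SimpleGraph

section

variable {V : Type*} {G : SimpleGraph V}

lemma IsIndepSet'.insert {Z : Set V} {v : V} (hZ : IsIndepSet' G Z)
    (hv : ∀ z ∈ Z, ¬ G.Adj z v) : IsIndepSet' G (insert v Z) := by
  rintro x (rfl | hx) y (rfl | hy)
  · exact G.irrefl
  · exact fun h => hv y hy h.symm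
  · exact hv x hx
  · exact hZ x hx y hy

lemma exists_indDomOn_univ_subset_union [Finite V] {S N : Set V} (hS : IsIndepSet' G S)
    (hN : ∀ v ∉ N, ∃ s ∈ S, s = v ∨ G.Adj s v) :
    ∃ Z ⊆ S ∪ N, IndDomOn G Set.univ Z := by
  obtain ⟨Z, hSZ, hZmax⟩ := Finite.exists_le_maximal
    (p := fun I : Set V => S ⊆ I ∧ I ⊆ S ∪ N ∧ IsIndepSet' G I)
    ⟨subset_rfl, Set.subset_union_left, hS⟩
  obtain ⟨-, hZsub, hZ⟩ := hZmax.prop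
  refine ⟨Z, hZsub, Set.subset_univ Z, hZ, fun v _ => ?_⟩
  by_cases hvN : v ∈ N
  · by_cases hvZ : v ∈ Z
    · exact ⟨v, hvZ, Or.inl rfl⟩
    by_contra! hundom
    have hins : S ⊆ insert v Z ∧ insert v Z ⊆ S ∪ N ∧ IsIndepSet' G (insert v Z) :=
      ⟨hSZ.trans (Set.subset_insert v Z), Set.insert_subset (Or.inr hvN) hZsub,
        IsIndepSet'.insert hZ fun z hz => (hundom z hz).2⟩
    exact hvZ (hZmax.eq_of_le hins (Set.subset_insert v Z) ▸ Set.mem_insert v Z)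
  · obtain ⟨s, hs, hsv⟩ := hN v hvN
    exact ⟨s, hSZ hs, hsv⟩

lemma IndDomOn.exists_dominator_diff_of_notMem_closedNbhd {A B X : Set V}
    (hX : IndDomOn G A X) {v : V} (hvA : v ∈ A) (hvB : v ∉ G.closedNbhd B) :
    ∃ x ∈ X \ B, x = v ∨ G.Adj x v := by
  obtain ⟨x, hx, hxv⟩ := hX.2.2 v hvA
  refine ⟨x, ⟨hx, fun hxB => hvB (Set.mem_biUnion hxB ?_)⟩, hxv⟩
  rcases hxv with rfl | hadj
  · exact Set.mem_insert x _
  · exact Set.mem_insert_of_mem x hadj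

lemma IndDomOn.isIndepSet'_union_diff {A B C X Y : Set V} (hX : IndDomOn G A X)
    (hY : IndDomOn G C Y) (hsep : ∀ a ∈ A \ B, ∀ c ∈ C \ B, ¬ G.Adj a c) :
    IsIndepSet' G ((X ∪ Y) \ B) := by
  rintro x ⟨hx | hx, hxB⟩ y ⟨hy | hy, hyB⟩
  · exact hX.2.1 x hx y hy
  · exact hsep x ⟨hX.1 hx, hxB⟩ y ⟨hY.1 hy, hyB⟩
  · exact fun h => hsep y ⟨hX.1 hy, hyB⟩ x ⟨hY.1 hx, hxB⟩ h.symm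
  · exact hY.2.1 x hx y hy

end

theorem indDom_combine_general {V : Type*} [Fintype V]
    (G : SimpleGraph V) (Δ : ℕ) (hΔ : ∀ v : V, (G.neighborSet v).ncard ≤ Δ)
    (A B C : Set V) (hAC : A ∪ C = Set.univ)
    (hsep : ∀ a ∈ A \ B, ∀ c ∈ C \ B, ¬ G.Adj a c)
    (X Y : Set V) (hX : IndDomOn G A X) (hY : IndDomOn G C Y) :
    ∃ Z : Set V, IndDomOn G Set.univ Z ∧
      Z.ncard ≤ X.ncard + Y.ncard + (Δ + 1) * B.ncard := by
  have hdom : ∀ v ∉ G.closedNbhd B, ∃ s ∈ (X ∪ Y) \ B, s = v ∨ G.Adj s v := by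
    intro v hv
    rcases hAC.symm.subset (Set.mem_univ v) with hvA | hvC
    · obtain ⟨x, hx, hxv⟩ := hX.exists_dominator_diff_of_notMem_closedNbhd hvA hv
      exact ⟨x, Set.sdiff_subset_sdiff_left Set.subset_union_left hx, hxv⟩
    · obtain ⟨y, hy, hyv⟩ := hY.exists_dominator_diff_of_notMem_closedNbhd hvC hv
      exact ⟨y, Set.sdiff_subset_sdiff_left Set.subset_union_right hy, hyv⟩
  obtain ⟨Z, hZsub, hZ⟩ :=
    exists_indDomOn_univ_subset_union (hX.isIndepSet'_union_diff hY hsep) hdom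
  refine ⟨Z, hZ, ?_⟩
  calc Z.ncard ≤ ((X ∪ Y) \ B ∪ G.closedNbhd B).ncard := Set.ncard_le_ncard hZsub
    _ ≤ ((X ∪ Y) \ B).ncard + (G.closedNbhd B).ncard := Set.ncard_union_le _ _
    _ ≤ X.ncard + Y.ncard + (Δ + 1) * B.ncard :=
        add_le_add ((Set.ncard_le_ncard Set.sdiff_subset).trans (Set.ncard_union_le X Y))
          (ncard_closedNbhd_le hΔ B)

/-- Combining independent dominating sets `X` of `G[A]` and `Y` of `G[C]` yields an
independent dominating set of `G` of size at most `|X| + |Y| + (Δ + 1) * |B|`. -/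
theorem indDom_combine {V : Type*} [Fintype V]
    (G : SimpleGraph V) (Δ : ℕ) (hΔ : ∀ v : V, (G.neighborSet v).ncard ≤ Δ)
    (A B C : Set V) (hAC : A ∪ C = Set.univ) (hB : A ∩ C = B)
    (hsep : ∀ a ∈ A \ B, ∀ c ∈ C \ B, ¬ G.Adj a c)
    (X Y : Set V) (hX : IndDomOn G A X) (hY : IndDomOn G C Y) :
    ∃ Z : Set V, IndDomOn G Set.univ Z ∧
      Z.ncard ≤ X.ncard + Y.ncard + (Δ + 1) * B.ncard :=
  indDom_combine_general G Δ hΔ A B C hAC hsep X Y hX hY
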